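/- arXiv:1906.09744 — 2 statements merged into one kernel-verified Lean document; each statement's English description precedes it below -/
import Mathlib

section
/- Let m ≥ 2 and let d_1, …, d_m be real numbers. For β > 0 define the Gibbs distribution q_j(β) = exp(−β·d_j) / Σ_{k=1}^{m} exp(−β·d_k), and let H(β) = −Σ_{j=1}^{m} q_j(β) · ln q_j(β) be its Shannon entropy (natural logarithm). Then H is differentiable on (0,∞) and its derivative satisfies H'(β) = −β · Var_{q(β)}(d), where Var_{q(β)}(d) = Σ_{j=1}^{m} q_j(β)·d_j² − (Σ_{j=1}^{m} q_j(β)·d_j)². In particular H'(β) ≤ 0 for all β > 0, and H'(β) < 0 whenever the d_j are not all equal. -/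
/-!
Write `Z(β) = ∑ₖ exp (-β dₖ)` and `⟨f⟩` for the average of `f` under `q(β)`. Since
`log qⱼ = -β dⱼ - log Z`, the entropy is `β ⟨d⟩ + log Z`. Differentiating the quotient
`⟨f⟩ = (∑ₖ fₖ exp (-β dₖ)) / Z` shows that `⟨f⟩' = -(⟨f d⟩ - ⟨f⟩⟨d⟩)`, and `(log Z)' = -⟨d⟩`,
so `H' = ⟨d⟩ - β (⟨d²⟩ - ⟨d⟩²) - ⟨d⟩`. The sign of the variance is Jensen's inequality for
the strictly convex `x ↦ x²`.
-/

open Real Finset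

noncomputable def partitionFn {ι : Type*} [Fintype ι] (d : ι → ℝ) (β : ℝ) : ℝ :=
  ∑ k, exp (-β * d k)

noncomputable def gibbs {ι : Type*} [Fintype ι] (d : ι → ℝ) (β : ℝ) (j : ι) : ℝ :=
  exp (-β * d j) / partitionFn d β

section Jensen

variable {ι : Type*} [Fintype ι] {w x : ι → ℝ}

theorem sq_sum_mul_le_sum_mul_sq (hw₀ : ∀ i, 0 ≤ w i) (hw₁ : ∑ i, w i = 1) :
    (∑ i, w i * x i) ^ 2 ≤ ∑ i, w i * x i ^ 2 :=
  (Even.strictConvexOn_pow even_two two_ne_zero).convexOn.map_sum_le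
    (fun i _ => hw₀ i) hw₁ (fun i _ => Set.mem_univ (x i))

theorem sq_sum_mul_lt_sum_mul_sq (hw₀ : ∀ i, 0 < w i) (hw₁ : ∑ i, w i = 1)
    (hx : ∃ j k, x j ≠ x k) :
    (∑ i, w i * x i) ^ 2 < ∑ i, w i * x i ^ 2 := by
  obtain ⟨j, k, hjk⟩ := hx
  exact (Even.strictConvexOn_pow even_two two_ne_zero).map_sum_lt
    (fun i _ => hw₀ i) hw₁ (fun i _ => Set.mem_univ (x i)) ⟨j, mem_univ j, k, mem_univ k, hjk⟩

end Jensen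

section Gibbs

variable {ι : Type*} [Fintype ι] (d : ι → ℝ)

theorem hasDerivAt_sum_mul_exp_neg_mul (f : ι → ℝ) (β : ℝ) :
    HasDerivAt (fun β => ∑ k, f k * exp (-β * d k)) (-∑ k, f k * d k * exp (-β * d k)) β := by
  refine (HasDerivAt.fun_sum (u := univ) fun k _ =>
    (((hasDerivAt_neg β).mul_const (d k)).exp).const_mul (f k)).congr_deriv ?_
  rw [← sum_neg_distrib]
  exact sum_congr rfl fun _ _ => by ring

theorem hasDerivAt_partitionFn (β : ℝ) :
    HasDerivAt (partitionFn d) (-∑ k, d k * exp (-β * d k)) β := by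
  have h := hasDerivAt_sum_mul_exp_neg_mul d 1 β
  simp only [Pi.one_apply, one_mul] at h
  exact h

theorem sum_gibbs_mul (f : ι → ℝ) (β : ℝ) :
    ∑ j, gibbs d β j * f j = (∑ j, f j * exp (-β * d j)) / partitionFn d β := by
  rw [sum_div]
  exact sum_congr rfl fun j _ => by rw [gibbs]; ring

variable [Nonempty ι]

theorem partitionFn_pos (β : ℝ) : 0 < partitionFn d β :=
  sum_pos (fun _ _ => exp_pos _) univ_nonempty

theorem gibbs_pos (β : ℝ) (j : ι) : 0 < gibbs d β j :=
  div_pos (exp_pos _) (partitionFn_pos d β)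

theorem sum_gibbs (β : ℝ) : ∑ j, gibbs d β j = 1 := by
  have h := sum_gibbs_mul d 1 β
  simp only [Pi.one_apply, mul_one, one_mul] at h
  rw [h]
  exact div_self (partitionFn_pos d β).ne'

theorem log_gibbs (β : ℝ) (j : ι) :
    log (gibbs d β j) = -β * d j - log (partitionFn d β) := by
  rw [gibbs, log_div (exp_pos _).ne' (partitionFn_pos d β).ne', log_exp]

theorem entropy_gibbs (β : ℝ) :
    -∑ j, gibbs d β j * log (gibbs d β j) =
      β * ∑ j, gibbs d β j * d j + log (partitionFn d β) := by
  have h : ∑ j, gibbs d β j * (-β * d j) = -β * ∑ j, gibbs d β j * d j := by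
    rw [mul_sum]
    exact sum_congr rfl fun _ _ => by ring
  simp only [log_gibbs, mul_sub, sum_sub_distrib, ← sum_mul, sum_gibbs, one_mul, h]
  ring

theorem hasDerivAt_log_partitionFn (β : ℝ) :
    HasDerivAt (fun β => log (partitionFn d β)) (-∑ j, gibbs d β j * d j) β := by
  convert (hasDerivAt_partitionFn d β).log (partitionFn_pos d β).ne' using 1
  rw [sum_gibbs_mul, neg_div]

theorem hasDerivAt_sum_gibbs_mul (f : ι → ℝ) (β : ℝ) :
    HasDerivAt (fun β => ∑ j, gibbs d β j * f j)
      (-(∑ j, gibbs d β j * (f j * d j) -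
        (∑ j, gibbs d β j * f j) * ∑ j, gibbs d β j * d j)) β := by
  simp only [sum_gibbs_mul]
  have hZ := (partitionFn_pos d β).ne'
  refine ((hasDerivAt_sum_mul_exp_neg_mul d f β).div
    (hasDerivAt_partitionFn d β) hZ).congr_deriv ?_
  generalize ∑ j, f j * exp (-β * d j) = A at *
  generalize ∑ j, f j * d j * exp (-β * d j) = B at *
  generalize ∑ j, d j * exp (-β * d j) = C at *
  field_simp
  ring

theorem hasDerivAt_entropy_gibbs (β : ℝ) :
    HasDerivAt (fun β => -∑ j, gibbs d β j * log (gibbs d β j))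
      (-β * (∑ j, gibbs d β j * d j ^ 2 - (∑ j, gibbs d β j * d j) ^ 2)) β := by
  rw [funext (entropy_gibbs d)]
  refine (((hasDerivAt_id' β).mul (hasDerivAt_sum_gibbs_mul d d β)).add
    (hasDerivAt_log_partitionFn d β)).congr_deriv ?_
  simp only [sq]
  ring

end Gibbs

/-- For the Gibbs distribution
`q_j(β) = exp(−β d_j) / Σ_k exp(−β d_k)` on `m ≥ 2` outcomes, the Shannon
entropy `H(β) = −Σ_j q_j(β) ln q_j(β)` is differentiable on `(0,∞)` with
`H'(β) = −β · Var_{q(β)}(d)`, where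
`Var_{q(β)}(d) = Σ_j q_j(β) d_j² − (Σ_j q_j(β) d_j)²`.  In particular
`H'(β) ≤ 0` for all `β > 0`, and `H'(β) < 0` whenever the `d_j` are not all
equal. -/
theorem gibbs_entropy_deriv
    (m : ℕ) (hm : 2 ≤ m) (d : Fin m → ℝ)
    (q : ℝ → Fin m → ℝ)
    (hq : ∀ β j, q β j = Real.exp (-β * d j) / ∑ k : Fin m, Real.exp (-β * d k))
    (H : ℝ → ℝ)
    (hH : ∀ β, H β = -∑ j : Fin m, q β j * Real.log (q β j))
    (Var : ℝ → ℝ)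
    (hVar : ∀ β, Var β =
      (∑ j : Fin m, q β j * (d j) ^ 2) - (∑ j : Fin m, q β j * d j) ^ 2) :
    (∀ β : ℝ, 0 < β → HasDerivAt H (-β * Var β) β) ∧
    (∀ β : ℝ, 0 < β → -β * Var β ≤ 0) ∧
    (∀ β : ℝ, 0 < β → (¬ ∀ j k : Fin m, d j = d k) → -β * Var β < 0) := by
  have : Nonempty (Fin m) := ⟨⟨0, by omega⟩⟩
  obtain rfl : q = gibbs d := funext fun β => funext (hq β)
  obtain rfl : H = _ := funext hH
  obtain rfl : Var = _ := funext hVar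
  refine ⟨fun β _ => hasDerivAt_entropy_gibbs d β, fun β hβ => ?_, fun β hβ hd => ?_⟩
  · exact mul_nonpos_of_nonpos_of_nonneg (neg_nonpos.2 hβ.le) <| sub_nonneg.2 <|
      sq_sum_mul_le_sum_mul_sq (fun j => (gibbs_pos d β j).le) (sum_gibbs d β)
  · push Not at hd
    exact mul_neg_of_neg_of_pos (neg_neg_of_pos hβ) <| sub_pos.2 <|
      sq_sum_mul_lt_sum_mul_sq (gibbs_pos d β) (sum_gibbs d β) hd
end

section
/- Let m ≥ 2 and let d_1, …, d_m be real numbers that are not all equal. For σ > 0 define p_j(σ) = exp(−d_j/(2σ²)) / Σ_{k=1}^{m} exp(−d_k/(2σ²)) and the Shannon entropy H(σ) = −Σ_{j=1}^{m} p_j(σ) · log₂ p_j(σ). Then H is strictly monotonically increasing on (0, ∞); consequently, the perplexity Perp(σ) = 2^{H(σ)} is also strictly monotonically increasing in the bandwidth σ. -/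
/-!
With `β = 1 / (2σ²)` the distribution `p(σ)` is the Gibbs distribution `∝ exp (-β d)`, whose
entropy in nats is `S(β) = β ⟨d⟩_β + log Z(β)`. Differentiating the moments
`Z_n(β) = ∑ d^n exp (-β d)` gives `S'(β) = -β Var_β(d)`, and the variance is positive because `d`
is not constant (strict Jensen for `x ↦ x²`). So `S` is strictly decreasing in `β > 0`, while `β`
is strictly decreasing in `σ > 0`; the perplexity is an increasing function of the entropy.
-/

open Real Finset

theorem sq_sum_mul_lt_sum_mul_sq_mul_sum {ι : Type*} {s : Finset ι} {w x : ι → ℝ}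
    (hw : ∀ i ∈ s, 0 < w i) (hx : ∃ j ∈ s, ∃ k ∈ s, x j ≠ x k) :
    (∑ i ∈ s, w i * x i) ^ 2 < (∑ i ∈ s, w i * x i ^ 2) * ∑ i ∈ s, w i := by
  obtain ⟨j, hj, -⟩ := id hx
  have hW : 0 < ∑ i ∈ s, w i := sum_pos hw ⟨j, hj⟩
  have jensen := (Even.strictConvexOn_pow even_two two_ne_zero).map_sum_lt
    (w := fun i => w i / ∑ i ∈ s, w i) (p := x) (fun i hi => div_pos (hw i hi) hW)
    (by rw [← sum_div, div_self hW.ne']) (fun _ _ => Set.mem_univ _) hx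
  simp only [smul_eq_mul, div_mul_eq_mul_div, ← sum_div, div_pow] at jensen
  rw [div_lt_div_iff₀ (by positivity) hW, sq (∑ i ∈ s, w i), ← mul_assoc] at jensen
  exact lt_of_mul_lt_mul_right jensen hW.le

namespace Gibbs

variable {ι : Type*} [Fintype ι] (d : ι → ℝ)

noncomputable def moment (n : ℕ) (β : ℝ) : ℝ := ∑ j, d j ^ n * exp (-(β * d j))

/-- The Shannon entropy, in nats, of the distribution `j ↦ exp (-β d j) / moment d 0 β`. -/
noncomputable def entropy (β : ℝ) : ℝ := β * moment d 1 β / moment d 0 β + log (moment d 0 β)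

theorem moment_zero_pos [Nonempty ι] (β : ℝ) : 0 < moment d 0 β :=
  sum_pos (fun _ _ => by positivity) univ_nonempty

theorem hasDerivAt_moment (n : ℕ) (β : ℝ) :
    HasDerivAt (moment d n) (-moment d (n + 1) β) β := by
  have := HasDerivAt.fun_sum fun j (_ : j ∈ univ) =>
    (((hasDerivAt_mul_const (d j)).neg).exp (x := β)).const_mul (d j ^ n)
  refine this.congr_deriv ?_
  simp only [moment, Pi.neg_apply, ← sum_neg_distrib]
  exact sum_congr rfl fun j _ => by ring

theorem sq_moment_one_lt (hd : ∃ j k, d j ≠ d k) (β : ℝ) :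
    moment d 1 β ^ 2 < moment d 2 β * moment d 0 β := by
  obtain ⟨j, k, hjk⟩ := hd
  have := sq_sum_mul_lt_sum_mul_sq_mul_sum (s := univ) (w := fun j => exp (-(β * d j))) (x := d)
    (fun _ _ => exp_pos _) ⟨j, mem_univ _, k, mem_univ _, hjk⟩
  simpa only [moment, pow_one, pow_zero, one_mul, mul_comm (exp _)] using this

theorem hasDerivAt_entropy [Nonempty ι] (β : ℝ) :
    HasDerivAt (entropy d)
      (-β * (moment d 2 β * moment d 0 β - moment d 1 β ^ 2) / moment d 0 β ^ 2) β := by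
  have hZ := (moment_zero_pos d β).ne'
  have := (((hasDerivAt_id β).mul (hasDerivAt_moment d 1 β)).div (hasDerivAt_moment d 0 β) hZ).add
    ((hasDerivAt_moment d 0 β).log hZ)
  refine this.congr_deriv ?_
  simp only [id, Pi.mul_apply, zero_add, one_add_one_eq_two]
  field_simp
  ring

theorem entropy_strictAntiOn (hd : ∃ j k, d j ≠ d k) : StrictAntiOn (entropy d) (Set.Ioi 0) := by
  have : Nonempty ι := ⟨hd.choose⟩
  refine strictAntiOn_of_hasDerivWithinAt_neg (convex_Ioi 0)
    (fun β _ => (hasDerivAt_entropy d β).continuousAt.continuousWithinAt)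
    (fun β _ => (hasDerivAt_entropy d β).hasDerivWithinAt) fun β hβ => ?_
  rw [interior_Ioi, Set.mem_Ioi] at hβ
  have := sq_moment_one_lt d hd β
  have := moment_zero_pos d β
  apply div_neg_of_neg_of_pos _ (by positivity)
  nlinarith

theorem entropy_eq_neg_sum_mul_log [Nonempty ι] (β : ℝ) :
    entropy d β = -∑ j, exp (-(β * d j)) / (∑ k, exp (-(β * d k))) *
      log (exp (-(β * d j)) / ∑ k, exp (-(β * d k))) := by
  have hM0 : ∑ j, exp (-(β * d j)) = moment d 0 β := by simp [moment]
  have hM1 : ∑ j, d j * exp (-(β * d j)) = moment d 1 β := by simp [moment]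
  have hZ := (moment_zero_pos d β).ne'
  have hsum : -∑ j, exp (-(β * d j)) / moment d 0 β * (-(β * d j) - log (moment d 0 β)) =
      (β * ∑ j, d j * exp (-(β * d j)) + log (moment d 0 β) * ∑ j, exp (-(β * d j)))
        / moment d 0 β := by
    rw [mul_sum, mul_sum, ← sum_add_distrib, sum_div, ← sum_neg_distrib]
    exact sum_congr rfl fun j _ => by field_simp; ring
  simp_rw [hM0, log_div (exp_ne_zero _) hZ, log_exp, hsum, hM0, hM1, entropy]
  field_simp

end Gibbs

theorem strictAntiOn_inv_two_mul_sq : StrictAntiOn (fun σ : ℝ => (2 * σ ^ 2)⁻¹) (Set.Ioi 0) :=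
  fun a (ha : 0 < a) _ _ hab => by
    dsimp only
    gcongr

theorem entropy_perplexity_strictMono_in_bandwidth_general
    (m : ℕ) (d : Fin m → ℝ)
    (hd : ¬ ∀ j k : Fin m, d j = d k)
    (p : ℝ → Fin m → ℝ)
    (hp : ∀ σ j, p σ j =
      Real.exp (-d j / (2 * σ ^ 2)) / ∑ k : Fin m, Real.exp (-d k / (2 * σ ^ 2)))
    (H : ℝ → ℝ)
    (hH : ∀ σ, H σ = -∑ j : Fin m, p σ j * Real.logb 2 (p σ j))
    (Perp : ℝ → ℝ)
    (hPerp : ∀ σ, Perp σ = (2 : ℝ) ^ (H σ)) :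
    StrictMonoOn H (Set.Ioi (0 : ℝ)) ∧ StrictMonoOn Perp (Set.Ioi (0 : ℝ)) := by
  push Not at hd
  have : Nonempty (Fin m) := ⟨hd.choose⟩
  have hH_eq : H = (fun β => Gibbs.entropy d β / log 2) ∘ fun σ => (2 * σ ^ 2)⁻¹ := by
    funext σ
    have harg : ∀ j, -d j / (2 * σ ^ 2) = -((2 * σ ^ 2)⁻¹ * d j) := fun j => by ring
    simp only [Function.comp, hH, hp, harg, Gibbs.entropy_eq_neg_sum_mul_log, logb, mul_div_assoc',
      ← sum_div, neg_div]
  have hH_mono : StrictMonoOn H (Set.Ioi 0) := by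
    rw [hH_eq]
    refine StrictAntiOn.comp (fun a ha b hb hab => ?_) strictAntiOn_inv_two_mul_sq
      fun σ (hσ : 0 < σ) => show 0 < (2 * σ ^ 2)⁻¹ by positivity
    exact div_lt_div_of_pos_right (Gibbs.entropy_strictAntiOn d hd ha hb hab) (log_pos one_lt_two)
  have hPerp_eq : Perp = (fun h : ℝ => (2 : ℝ) ^ h) ∘ H := funext hPerp
  exact ⟨hH_mono, hPerp_eq ▸ (strictMono_rpow_of_base_gt_one one_lt_two).comp_strictMonoOn hH_mono⟩

/-- With `p_j(σ) = exp(−d_j/(2σ²)) / Σ_k exp(−d_k/(2σ²))` for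
`m ≥ 2` squared distances `d_1, …, d_m` that are not all equal, the Shannon
entropy `H(σ) = −Σ_j p_j(σ) log₂ p_j(σ)` is strictly monotonically increasing
on `(0, ∞)`, and consequently so is the perplexity `Perp(σ) = 2^{H(σ)}`. -/
theorem entropy_perplexity_strictMono_in_bandwidth
    (m : ℕ) (hm : 2 ≤ m) (d : Fin m → ℝ)
    (hd : ¬ ∀ j k : Fin m, d j = d k)
    (p : ℝ → Fin m → ℝ)
    (hp : ∀ σ j, p σ j =
      Real.exp (-d j / (2 * σ ^ 2)) / ∑ k : Fin m, Real.exp (-d k / (2 * σ ^ 2)))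
    (H : ℝ → ℝ)
    (hH : ∀ σ, H σ = -∑ j : Fin m, p σ j * Real.logb 2 (p σ j))
    (Perp : ℝ → ℝ)
    (hPerp : ∀ σ, Perp σ = (2 : ℝ) ^ (H σ)) :
    StrictMonoOn H (Set.Ioi (0 : ℝ)) ∧ StrictMonoOn Perp (Set.Ioi (0 : ℝ)) :=
  entropy_perplexity_strictMono_in_bandwidth_general m d hd p hp H hH Perp hPerp
end
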